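/- Example (growth model on a segment with atomic seed distribution): Let S = [0,n] with seed distribution μ(0) = 1 − 1/n, μ(n) = 1/n, in the standardized growth model. Then n⁻¹·C⁽ⁿ⁾ converges in distribution as n → ∞ to min(1, (1+ξ)/2), where ξ is Exponential(1). -/

import Mathlib

open MeasureTheory ProbabilityTheory Metric Set

noncomputable section

/-- The interarrival increments of the seed arrival times. -/
def interArrival {Ω : Type*} (τ : ℕ → Ω → ℝ) : ℕ → Ω → ℝ
  | 0 => τ 0
  | (i+1) => fun ω => τ (i+1) ω - τ i ω

/-- The covered region at time `t` in the standardized growth model. -/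
def coveredSet {S : Type*} [MetricSpace S] {Ω : Type*} (τ : ℕ → Ω → ℝ)
    (σs : ℕ → Ω → S) (ω : Ω) (t : ℝ) : Set S :=
  ⋃ i ∈ {i : ℕ | τ i ω ≤ t}, Metric.closedBall (σs i ω) (t - τ i ω)

/-- The cover time of the whole space. -/
def coverTime {S : Type*} [MetricSpace S] {Ω : Type*} (τ : ℕ → Ω → ℝ)
    (σs : ℕ → Ω → S) (ω : Ω) : ℝ :=
  sInf {t : ℝ | 0 ≤ t ∧ coveredSet τ σs ω t = Set.univ}

/-- The standardized growth model (`λ = v = 1`): seeds arrive at the times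
`0 < τ 0 < τ 1 < ⋯` of a rate-1 Poisson process (i.i.d. Exponential(1) interarrivals),
at i.i.d. positions `σs i` with distribution `μ`, all jointly independent. -/
structure IsGrowthModel {S : Type*} [MetricSpace S] [MeasurableSpace S]
    {Ω : Type*} [MeasurableSpace Ω] (P : Measure Ω) (μ : Measure S)
    (τ : ℕ → Ω → ℝ) (σs : ℕ → Ω → S) : Prop where
  meas_τ : ∀ i, Measurable (τ i)
  meas_σ : ∀ i, Measurable (σs i)
  pos : ∀ ω, 0 < τ 0 ω
  mono : ∀ ω, StrictMono fun i => τ i ω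
  tendsto : ∀ ω, Filter.Tendsto (fun i => τ i ω) Filter.atTop Filter.atTop
  dist : ∀ i, P.map (fun ω => (interArrival τ i ω, σs i ω)) = (expMeasure 1).prod μ
  indep : iIndepFun
    (fun i ω => (interArrival τ i ω, σs i ω)) P

open scoped ENNReal

/-- The time for the growth process on the line to cover the segment `[0, n]`. -/
def segmentCoverTime {Ω : Type*} (n : ℕ) (τ : ℕ → Ω → ℝ) (σs : ℕ → Ω → ℝ) (ω : Ω) : ℝ :=
  sInf {t : ℝ | 0 ≤ t ∧ Set.Icc (0:ℝ) n ⊆ coveredSet τ σs ω t}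

/-- The seed distribution on `[0,n] ⊆ ℝ` putting mass `1 − 1/n` at `0` and `1/n` at `n`. -/
def segSeedMeasure (n : ℕ) : Measure ℝ :=
  ((1 : ℝ≥0∞) - (n : ℝ≥0∞)⁻¹) • Measure.dirac (0:ℝ) +
    (n : ℝ≥0∞)⁻¹ • Measure.dirac (n : ℝ)

/-!
The first seed at `n` arrives after a Geometric(`1/n`) number of independent Exponential(1)
interarrival times; summing the characteristic function over the number of summands shows that
its arrival time `Tₙ` is Exponential(`1/n`), so `Tₙ / n` is exactly Exponential(1). In the same
way the first seed at `0` arrives at an Exponential(`1 - 1/n`) time `T₀`, so `T₀ / n → 0` in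
probability. Almost surely every seed sits at `0` or at `n` and both ends are hit; then the
cover time is `min (T₀ + n) (Tₙ + n) ((T₀ + Tₙ + n) / 2)`, which exceeds `min n ((n + Tₙ) / 2)`
by at most `T₀`. Hence `C⁽ⁿ⁾ / n` is within `T₀ / n` of `min 1 ((1 + Tₙ / n) / 2)`, whose law
does not depend on `n`.
-/
open Filter Topology

instance isProbabilityMeasure_expMeasure_one : IsProbabilityMeasure (expMeasure 1) :=
  isProbabilityMeasure_expMeasure one_pos

open Complex in
lemma charFun_expMeasure {r : ℝ} (hr : 0 < r) (t : ℝ) :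
    charFun (expMeasure r) t = r / (r - t * I) := by
  have hmeas : Measurable (gammaPDF 1 r) := (measurable_gammaPDFReal 1 r).ennreal_ofReal
  have hdensity : ∀ x : ℝ, (gammaPDF 1 r x).toReal • exp (t * x * I)
      = (Ici 0).indicator (fun x : ℝ => r * exp ((t * I - r) * x)) x := by
    intro x
    rcases lt_or_ge x 0 with hx | hx
    · simp [gammaPDF_of_neg hx, hx]
    · rw [indicator_of_mem (mem_Ici.2 hx), gammaPDF_of_nonneg hx]
      simp only [Real.Gamma_one, Real.rpow_one, sub_self, Real.rpow_zero, div_one, mul_one]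
      rw [ENNReal.toReal_ofReal (by positivity), Complex.real_smul]
      push_cast
      rw [mul_assoc, ← Complex.exp_add]
      ring_nf
  have hre : (t * I - r : ℂ).re < 0 := by simpa using hr
  rw [charFun_apply_real, expMeasure, gammaMeasure,
    integral_withDensity_eq_integral_toReal_smul hmeas (ae_of_all _ fun _ => ENNReal.ofReal_lt_top)]
  simp_rw [hdensity]
  rw [integral_indicator measurableSet_Ici, integral_Ici_eq_integral_Ioi, integral_const_mul,
    integral_exp_mul_complex_Ioi hre, Complex.ofReal_zero, mul_zero, Complex.exp_zero, ← neg_sub,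
    div_neg, neg_div, neg_neg, mul_one_div]

lemma expMeasure_map_const_mul {r c : ℝ} (hr : 0 < r) (hc : 0 < c) :
    (expMeasure r).map (c * ·) = expMeasure (r / c) := by
  have := isProbabilityMeasure_expMeasure hr
  have := isProbabilityMeasure_expMeasure (div_pos hr hc)
  refine Measure.ext_of_charFun (funext fun t => ?_)
  rw [charFun_map_mul, charFun_expMeasure hr, charFun_expMeasure (div_pos hr hc)]
  have hc' : (c : ℂ) ≠ 0 := by exact_mod_cast hc.ne'
  push_cast
  field_simp

lemma expMeasure_Ioi {r x : ℝ} (hr : 0 < r) (hx : 0 ≤ x) :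
    expMeasure r (Ioi x) = ENNReal.ofReal (Real.exp (-(r * x))) := by
  have := isProbabilityMeasure_expMeasure hr
  rw [← ofReal_measureReal, ← compl_Iic, probReal_compl_eq_one_sub measurableSet_Iic,
    ← cdf_eq_real, cdf_expMeasure_eq hr, if_pos hx, sub_sub_cancel]

open Complex in
/-- The characteristic function of a Geometric(`p`) sum of independent Exponential(1) variables,
split according to the number of summands: it is that of Exponential(`p`). -/
lemma hasSum_geometric_mul_charFun_expMeasure {p : ℝ} (hp : 0 < p) (hp1 : p ≤ 1) (t : ℝ) :
    HasSum (fun k => (((1 - p : ℝ) : ℂ) ^ k * p * charFun (expMeasure 1) t ^ (k + 1)))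
      (p / (p - t * I)) := by
  set φ := charFun (expMeasure 1) t
  have hφ : φ = 1 / (1 - t * I) := by simpa using charFun_expMeasure one_pos t
  have hqφ : ‖((1 - p : ℝ) : ℂ) * φ‖ < 1 := by
    rw [norm_mul, Complex.norm_real, Real.norm_of_nonneg (by linarith)]
    calc (1 - p) * ‖φ‖ ≤ (1 - p) * 1 :=
          mul_le_mul_of_nonneg_left (norm_charFun_le_one t) (by linarith)
      _ < 1 := by linarith
  have h1 : (1 - t * I : ℂ) ≠ 0 := fun h => by simpa using congrArg re h
  have hpt : (p - t * I : ℂ) ≠ 0 := fun h => by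
    have := congrArg re h; simp at this; linarith
  have hsum : (p / (p - t * I) : ℂ) = p * φ * (1 - ((1 - p : ℝ) : ℂ) * φ)⁻¹ := by
    have hden : 1 - ((1 - p : ℝ) : ℂ) * (1 / (1 - t * I)) = (p - t * I) / (1 - t * I) := by
      field_simp; push_cast; ring
    rw [hφ, hden]
    field_simp
  have hterm : (fun k => (((1 - p : ℝ) : ℂ) ^ k * p * φ ^ (k + 1)))
      = fun k => p * φ * (((1 - p : ℝ) : ℂ) * φ) ^ k := by
    funext k; ring
  rw [hsum, hterm]
  exact (hasSum_geometric_of_norm_lt_one hqφ).mul_left _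

lemma norm_integral_comp_sub_le {Ω E : Type*} [MeasurableSpace Ω] {P : Measure Ω}
    [IsProbabilityMeasure P] [PseudoMetricSpace E] [SecondCountableTopology E] [MeasurableSpace E]
    [BorelSpace E] {X Y : Ω → E} (hX : Measurable X) (hY : Measurable Y)
    (f : BoundedContinuousFunction E ℝ) {ε δ : ℝ} (hε : 0 ≤ ε)
    (hf : ∀ᵐ ω ∂P, dist (X ω) (Y ω) ≤ δ → dist (f (X ω)) (f (Y ω)) ≤ ε) :
    ‖∫ ω, f (X ω) ∂P - ∫ ω, f (Y ω) ∂P‖ ≤ ε + 2 * ‖f‖ * P.real {ω | δ < dist (X ω) (Y ω)} := by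
  set D := {ω | δ < dist (X ω) (Y ω)}
  have hD : MeasurableSet D := measurableSet_lt measurable_const (hX.dist hY)
  have hint : ∀ Z : Ω → E, Measurable Z → Integrable (fun ω => f (Z ω)) P := fun Z hZ =>
    .of_bound (f.continuous.measurable.comp hZ).aestronglyMeasurable ‖f‖
      (ae_of_all _ fun ω => f.norm_coe_le_norm _)
  have hbound : ∀ᵐ ω ∂P, ‖f (X ω) - f (Y ω)‖ ≤ ε + D.indicator (fun _ => 2 * ‖f‖) ω := by
    filter_upwards [hf] with ω hω
    by_cases hωD : ω ∈ D
    · rw [indicator_of_mem hωD]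
      have := norm_sub_le (f (X ω)) (f (Y ω))
      have := f.norm_coe_le_norm (X ω)
      have := f.norm_coe_le_norm (Y ω)
      linarith
    · rw [indicator_of_notMem hωD, add_zero, ← dist_eq_norm]
      exact hω (not_lt.1 hωD)
  rw [← integral_sub (hint X hX) (hint Y hY)]
  calc ‖∫ ω, f (X ω) - f (Y ω) ∂P‖ ≤ ∫ ω, ε + D.indicator (fun _ => 2 * ‖f‖) ω ∂P :=
        norm_integral_le_of_norm_le ((integrable_const _).add ((integrable_const _).indicator hD))
          hbound
    _ = ε + 2 * ‖f‖ * P.real D := by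
        rw [integral_add (integrable_const _) ((integrable_const _).indicator hD),
          integral_const, integral_indicator_const _ hD]
        simp [mul_comm]

theorem tendsto_integral_sub_of_tendsto_measure_dist {ι : Type*} {l : Filter ι}
    {Ω : ι → Type*} [∀ i, MeasurableSpace (Ω i)] {P : ∀ i, Measure (Ω i)}
    [∀ i, IsProbabilityMeasure (P i)] {E : Type*} [PseudoMetricSpace E]
    [SecondCountableTopology E] [MeasurableSpace E] [BorelSpace E]
    {X Y : ∀ i, Ω i → E} (hX : ∀ᶠ i in l, Measurable (X i)) (hY : ∀ᶠ i in l, Measurable (Y i))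
    {K : Set E} (hK : IsCompact K) (hYK : ∀ᶠ i in l, ∀ᵐ ω ∂P i, Y i ω ∈ K)
    (hXY : ∀ δ > 0, Tendsto (fun i => P i {ω | δ < dist (X i ω) (Y i ω)}) l (𝓝 0))
    (f : BoundedContinuousFunction E ℝ) :
    Tendsto (fun i => ∫ ω, f (X i ω) ∂P i - ∫ ω, f (Y i ω) ∂P i) l (𝓝 0) := by
  rw [Metric.tendsto_nhds]
  intro ε hε
  obtain ⟨δ, hδ, hfδ⟩ := Metric.mem_uniformity_dist.1
    (hK.uniformContinuousAt_of_continuousAt f (fun _ _ => f.continuous.continuousAt)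
      (Metric.dist_mem_uniformity (half_pos hε)))
  have hsmall : ∀ᶠ i in l,
      2 * ‖f‖ * (P i).real {ω | δ / 2 < dist (X i ω) (Y i ω)} < ε / 2 := by
    have h := (ENNReal.tendsto_toReal ENNReal.zero_ne_top).comp (hXY (δ / 2) (half_pos hδ))
    rw [ENNReal.toReal_zero] at h
    exact (h.const_mul (2 * ‖f‖)).eventually (gt_mem_nhds (by simpa using half_pos hε))
  filter_upwards [hsmall, hX, hY, hYK] with i hi hXi hYi hYKi
  rw [dist_zero_right]
  refine (norm_integral_comp_sub_le hXi hYi f (half_pos hε).le (δ := δ / 2) ?_).trans_lt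
    (by linarith)
  filter_upwards [hYKi] with ω hωK hω
  rw [dist_comm]
  exact (hfδ (by rw [dist_comm]; linarith) hωK).le

section FirstHit

variable {S Ω : Type*} (σs : ℕ → Ω → S) (A : Set S)

/-- The index of the first seed landing in `A` (junk value `0` if there is none). -/
def firstHit (ω : Ω) : ℕ := sInf {i | σs i ω ∈ A}

def hitTime (τ : ℕ → Ω → ℝ) (ω : Ω) : ℝ := τ (firstHit σs A ω) ω

def hitsFirstAt (k : ℕ) : Set Ω := {ω | σs k ω ∈ A ∧ ∀ i < k, σs i ω ∉ A}

variable {σs A}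

lemma firstHit_eq_of_mem_hitsFirstAt {k : ℕ} {ω : Ω} (h : ω ∈ hitsFirstAt σs A k) :
    firstHit σs A ω = k :=
  le_antisymm (Nat.sInf_le h.1) (le_csInf ⟨k, h.1⟩ fun i hi => not_lt.1 fun hik => h.2 i hik hi)

lemma mem_hitsFirstAt_firstHit {ω : Ω} (h : ∃ i, σs i ω ∈ A) :
    ω ∈ hitsFirstAt σs A (firstHit σs A ω) :=
  ⟨Nat.sInf_mem h, fun _ hi => Nat.notMem_of_lt_sInf hi⟩

lemma iUnion_hitsFirstAt : ⋃ k, hitsFirstAt σs A k = {ω | ∃ i, σs i ω ∈ A} :=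
  Subset.antisymm (iUnion_subset fun k _ hω => ⟨k, hω.1⟩)
    fun _ h => mem_iUnion.2 ⟨_, mem_hitsFirstAt_firstHit h⟩

open Function in
lemma pairwise_disjoint_hitsFirstAt : Pairwise (Disjoint on hitsFirstAt σs A) :=
  fun _ _ hkl => disjoint_left.2 fun _ hk hl =>
    hkl ((firstHit_eq_of_mem_hitsFirstAt hk).symm.trans (firstHit_eq_of_mem_hitsFirstAt hl))

lemma hitTime_le {τ : ℕ → Ω → ℝ} {ω : Ω} (hτ : Monotone (τ · ω)) {i : ℕ} (hi : σs i ω ∈ A) :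
    hitTime σs A τ ω ≤ τ i ω :=
  hτ (Nat.sInf_le hi)

lemma prod_indicator_eq_indicator_hitsFirstAt {R : Type*} [CommMonoidWithZero R] (k : ℕ) (ω : Ω) :
    ∏ j : Fin (k + 1), (if (j : ℕ) < k then Aᶜ else A).indicator (fun _ => (1 : R)) (σs j ω)
      = (hitsFirstAt σs A k).indicator 1 ω := by
  by_cases hω : ω ∈ hitsFirstAt σs A k
  · rw [indicator_of_mem hω]
    refine Finset.prod_eq_one fun j _ => indicator_of_mem ?_ _
    split_ifs with hj
    · exact hω.2 j hj
    · rw [show (j : ℕ) = k by omega]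
      exact hω.1
  · rw [indicator_of_notMem hω]
    simp only [hitsFirstAt, mem_ofPred_eq, not_and_or, not_forall, not_not] at hω
    obtain ⟨j, hj⟩ : ∃ j : Fin (k + 1), σs j ω ∉ if (j : ℕ) < k then Aᶜ else A := by
      rcases hω with h | ⟨i, hi, h⟩
      · exact ⟨Fin.last k, by simpa using h⟩
      · exact ⟨⟨i, by omega⟩, by simpa [hi] using h⟩
    exact Finset.prod_eq_zero (Finset.mem_univ j) (indicator_of_notMem hj _)

variable [MeasurableSpace S] [MeasurableSpace Ω]

lemma measurableSet_hitsFirstAt (hσ : ∀ i, Measurable (σs i)) (hA : MeasurableSet A) (k : ℕ) :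
    MeasurableSet (hitsFirstAt σs A k) := by
  have : hitsFirstAt σs A k = σs k ⁻¹' A ∩ ⋂ i ∈ Finset.range k, σs i ⁻¹' Aᶜ := by
    ext; simp [hitsFirstAt]
  rw [this]
  exact (hσ k hA).inter (.biInter (Finset.range k).countable_toSet fun i _ => hσ i hA.compl)

lemma measurable_firstHit (hσ : ∀ i, Measurable (σs i)) (hA : MeasurableSet A) :
    Measurable (firstHit σs A) := by
  refine measurable_to_countable' fun k => ?_
  have : firstHit σs A ⁻¹' {k} = hitsFirstAt σs A k ∪ {_ω | k = 0} ∩ ⋂ i, σs i ⁻¹' Aᶜ := by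
    ext ω
    by_cases h : ∃ i, σs i ω ∈ A
    · obtain ⟨i, hi⟩ := h
      simp only [mem_preimage, mem_singleton_iff, mem_union, mem_inter_iff, mem_iInter,
        mem_compl_iff]
      exact ⟨fun hfk => Or.inl (hfk ▸ mem_hitsFirstAt_firstHit ⟨i, hi⟩),
        fun h => h.elim firstHit_eq_of_mem_hitsFirstAt fun h => (h.2 i hi).elim⟩
    · simp only [not_exists] at h
      have hfirst : firstHit σs A ω = 0 := by simp [firstHit, h]
      simp [hitsFirstAt, hfirst, h, eq_comm]
  rw [this]
  exact (measurableSet_hitsFirstAt hσ hA k).union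
    ((MeasurableSet.const _).inter (.iInter fun i => hσ i hA.compl))

lemma measurable_hitTime {τ : ℕ → Ω → ℝ} (hτ : ∀ i, Measurable (τ i))
    (hσ : ∀ i, Measurable (σs i)) (hA : MeasurableSet A) : Measurable (hitTime σs A τ) :=
  (measurable_from_prod_countable_left (f := fun p : Ω × ℕ => τ p.2 p.1) hτ).comp
    (measurable_id.prodMk (measurable_firstHit hσ hA))

end FirstHit

lemma sum_range_interArrival {Ω : Type*} (τ : ℕ → Ω → ℝ) (k : ℕ) (ω : Ω) :
    ∑ i ∈ Finset.range (k + 1), interArrival τ i ω = τ k ω := by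
  induction k with
  | zero => simp [interArrival]
  | succ k ih => rw [Finset.sum_range_succ, ih, interArrival, add_sub_cancel]

namespace IsGrowthModel

variable {S Ω : Type*} [MetricSpace S] [MeasurableSpace S] [MeasurableSpace Ω]
  {P : Measure Ω} {μ : Measure S} {τ : ℕ → Ω → ℝ} {σs : ℕ → Ω → S}
  (M : IsGrowthModel P μ τ σs)
include M

lemma arrival_pos (k : ℕ) (ω : Ω) : 0 < τ k ω :=
  (M.pos ω).trans_le ((M.mono ω).monotone k.zero_le)

lemma measurable_interArrival (i : ℕ) : Measurable (interArrival τ i) := by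
  cases i with
  | zero => exact M.meas_τ 0
  | succ i => exact (M.meas_τ (i + 1)).sub (M.meas_τ i)

lemma measurable_seed (i : ℕ) : Measurable fun ω => (interArrival τ i ω, σs i ω) :=
  (M.measurable_interArrival i).prodMk (M.meas_σ i)

variable [IsProbabilityMeasure μ]

lemma measure_preimage_seed (i : ℕ) {B : Set S} (hB : MeasurableSet B) :
    P (σs i ⁻¹' B) = μ B := by
  have h := congrArg (fun ν => ν (univ ×ˢ B)) (M.dist i)
  rwa [Measure.map_apply (M.measurable_seed i) (MeasurableSet.univ.prod hB), Measure.prod_prod,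
    measure_univ, one_mul, mk_preimage_prod, preimage_univ, univ_inter] at h

open Complex in
lemma integral_exp_mul_indicator (i : ℕ) (t : ℝ) {B : Set S} (hB : MeasurableSet B) :
    ∫ ω, exp (t * interArrival τ i ω * I) * B.indicator (fun _ => 1) (σs i ω) ∂P
      = charFun (expMeasure 1) t * μ.real B := by
  have hg : Measurable fun z : ℝ × S => exp (t * z.1 * I) * B.indicator (fun _ => (1 : ℂ)) z.2 :=
    (by fun_prop : Measurable fun z : ℝ × S => exp (t * z.1 * I)).mul
      ((measurable_const.indicator hB).comp measurable_snd)
  rw [← integral_map (M.measurable_seed i).aemeasurable hg.aestronglyMeasurable, M.dist i,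
    integral_prod_mul (fun x : ℝ => exp (t * x * I)) (B.indicator fun _ => (1 : ℂ)),
    charFun_apply_real, integral_indicator_const _ hB, Complex.real_smul, mul_one]

open Complex in
/-- On `hitsFirstAt σs A k` the integrand is a product over the independent pairs
`(interArrival τ j, σs j)`, `j ≤ k`. -/
lemma setIntegral_exp_hitsFirstAt {A : Set S} (hA : MeasurableSet A) (k : ℕ) (t : ℝ) :
    ∫ ω in hitsFirstAt σs A k, exp (t * τ k ω * I) ∂P
      = μ.real Aᶜ ^ k * μ.real A * charFun (expMeasure 1) t ^ (k + 1) := by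
  set B : Fin (k + 1) → Set S := fun j => if (j : ℕ) < k then Aᶜ else A with hB_def
  have hB : ∀ j, MeasurableSet (B j) := fun j => by
    simp only [hB_def]; split_ifs; exacts [hA.compl, hA]
  set f : Fin (k + 1) → ℝ × S → ℂ :=
    fun j z => exp (t * z.1 * I) * (B j).indicator (fun _ => 1) z.2
  have hf : ∀ j, Measurable (f j) := fun j =>
    (by fun_prop : Measurable fun z : ℝ × S => exp (t * z.1 * I)).mul
      ((measurable_const.indicator (hB j)).comp measurable_snd)
  have hexp : ∀ ω, ∏ j : Fin (k + 1), exp (t * interArrival τ j ω * I) = exp (t * τ k ω * I) := by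
    intro ω
    rw [← Complex.exp_sum, ← sum_range_interArrival τ k ω, ← Fin.sum_univ_eq_sum_range]
    push_cast
    rw [Finset.mul_sum, Finset.sum_mul]
  have hfactor : ∀ ω, (hitsFirstAt σs A k).indicator (fun ω => exp (t * τ k ω * I)) ω
      = ∏ j : Fin (k + 1), f j (interArrival τ j ω, σs j ω) := fun ω => by
    simp only [f, Finset.prod_mul_distrib, hexp, hB_def, prod_indicator_eq_indicator_hitsFirstAt]
    by_cases hω : ω ∈ hitsFirstAt σs A k <;> simp [hω]
  rw [← integral_indicator (measurableSet_hitsFirstAt M.meas_σ hA k), funext hfactor,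
    (M.indep.precomp Fin.val_injective).integral_fun_prod_comp
      (fun j => (M.measurable_seed j).aemeasurable) (fun j => (hf j).aestronglyMeasurable)]
  simp only [f, M.integral_exp_mul_indicator _ t (hB _)]
  rw [Fin.prod_univ_castSucc]
  simp [hB_def, Finset.prod_const]
  ring

lemma measureReal_hitsFirstAt {A : Set S} (hA : MeasurableSet A) (k : ℕ) :
    P.real (hitsFirstAt σs A k) = μ.real Aᶜ ^ k * μ.real A := by
  have h := M.setIntegral_exp_hitsFirstAt hA k 0
  simp only [Complex.ofReal_zero, zero_mul, Complex.exp_zero, setIntegral_const, charFun_zero,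
    probReal_univ, Complex.ofReal_one, one_pow, mul_one, Complex.real_smul] at h
  exact_mod_cast h

variable [IsProbabilityMeasure P]

lemma ae_exists_mem {A : Set S} (hA : MeasurableSet A) (hp : 0 < μ.real A) :
    ∀ᵐ ω ∂P, ∃ i, σs i ω ∈ A := by
  have hq : μ.real Aᶜ = 1 - μ.real A := probReal_compl_eq_one_sub hA
  have hgeom : HasSum (fun k => μ.real Aᶜ ^ k * μ.real A) 1 := by
    have h := (hasSum_geometric_of_lt_one (r := μ.real Aᶜ) measureReal_nonneg
      (by linarith)).mul_right (μ.real A)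
    rwa [hq, sub_sub_cancel, inv_mul_cancel₀ hp.ne', ← hq] at h
  have hmeas : ∀ k, MeasurableSet (hitsFirstAt σs A k) := measurableSet_hitsFirstAt M.meas_σ hA
  have hunion : MeasurableSet {ω | ∃ i, σs i ω ∈ A} := iUnion_hitsFirstAt ▸ .iUnion hmeas
  rw [ae_iff_measure_eq hunion.nullMeasurableSet, ← iUnion_hitsFirstAt, measure_univ,
    measure_iUnion pairwise_disjoint_hitsFirstAt hmeas,
    tsum_congr fun k => (ofReal_measureReal (μ := P)).symm.trans
      (congrArg ENNReal.ofReal (M.measureReal_hitsFirstAt hA k)),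
    ← ENNReal.ofReal_tsum_of_nonneg (fun k => by positivity) hgeom.summable, hgeom.tsum_eq,
    ENNReal.ofReal_one]

open Complex in
theorem map_hitTime {A : Set S} (hA : MeasurableSet A) (hp : 0 < μ.real A) :
    P.map (hitTime σs A τ) = expMeasure (μ.real A) := by
  have hT : Measurable (hitTime σs A τ) := measurable_hitTime M.meas_τ M.meas_σ hA
  have hmeas : ∀ k, MeasurableSet (hitsFirstAt σs A k) := measurableSet_hitsFirstAt M.meas_σ hA
  have := isProbabilityMeasure_expMeasure hp
  have := Measure.isProbabilityMeasure_map (μ := P) hT.aemeasurable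
  refine Measure.ext_of_charFun (funext fun t => ?_)
  have hint : Integrable (fun ω => exp (t * hitTime σs A τ ω * I)) P :=
    .of_bound (by fun_prop) 1 (ae_of_all _ fun ω => by
      rw [← Complex.ofReal_mul, Complex.norm_exp_ofReal_mul_I])
  have hfull : ⋃ k, hitsFirstAt σs A k ∈ ae P := by
    rw [iUnion_hitsFirstAt]; exact M.ae_exists_mem hA hp
  have hterm : ∀ k, ∫ ω in hitsFirstAt σs A k, exp (t * hitTime σs A τ ω * I) ∂P
      = ((1 - μ.real A : ℝ) : ℂ) ^ k * μ.real A * charFun (expMeasure 1) t ^ (k + 1) := by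
    intro k
    rw [← probReal_compl_eq_one_sub hA, ← M.setIntegral_exp_hitsFirstAt hA k t]
    exact setIntegral_congr_fun (hmeas k) fun ω hω => by
      rw [hitTime, firstHit_eq_of_mem_hitsFirstAt hω]
  rw [charFun_apply_real, integral_map hT.aemeasurable (by fun_prop), charFun_expMeasure hp,
    ← setIntegral_univ, ← setIntegral_congr_set (Filter.eventuallyEq_univ.2 hfull),
    integral_iUnion hmeas pairwise_disjoint_hitsFirstAt hint.integrableOn, tsum_congr hterm,
    (hasSum_geometric_mul_charFun_expMeasure hp measureReal_le_one t).tsum_eq]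

lemma measure_lt_hitTime {A : Set S} (hA : MeasurableSet A) (hp : 0 < μ.real A) {s : ℝ}
    (hs : 0 ≤ s) : P {ω | s < hitTime σs A τ ω} = ENNReal.ofReal (Real.exp (-(μ.real A * s))) := by
  rw [← expMeasure_Ioi hp hs, ← M.map_hitTime hA hp,
    Measure.map_apply (measurable_hitTime M.meas_τ M.meas_σ hA) measurableSet_Ioi]
  rfl

end IsGrowthModel

lemma mem_coveredSet {S Ω : Type*} [MetricSpace S] {τ : ℕ → Ω → ℝ} {σs : ℕ → Ω → S} {ω : Ω}
    {t : ℝ} {x : S} :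
    x ∈ coveredSet τ σs ω t ↔ ∃ i, τ i ω ≤ t ∧ dist x (σs i ω) ≤ t - τ i ω := by
  simp [coveredSet]

/-- The time at which `[0, L]` is covered when the first seeds at `0` and at `L` arrive at times
`a` and `b` and all other seeds sit at the two ends. -/
def endpointCoverTime (L a b : ℝ) : ℝ := min (min (a + L) (b + L)) ((a + b + L) / 2)

lemma continuous_endpointCoverTime (L : ℝ) :
    Continuous fun p : ℝ × ℝ => endpointCoverTime L p.1 p.2 := by
  unfold endpointCoverTime
  fun_prop

section EndpointSeeds

variable {Ω : Type*} {n : ℕ} {τ σs : ℕ → Ω → ℝ} {ω : Ω} {a b : ℝ}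

lemma Icc_subset_coveredSet_endpointCoverTime {i j : ℕ} (hi : σs i ω = 0 ∧ τ i ω = a)
    (hj : σs j ω = n ∧ τ j ω = b) :
    Icc 0 (n : ℝ) ⊆ coveredSet τ σs ω (endpointCoverTime n a b) := by
  set F := endpointCoverTime n a b with hF
  have hF_cases : F = a + n ∨ F = b + n ∨ F = (a + b + n) / 2 := by
    simp only [hF, endpointCoverTime, min_def]
    split_ifs <;> simp
  have hFa : F ≤ a + n := (min_le_left _ _).trans (min_le_left _ _)
  rintro x ⟨hx0, hxn⟩
  rw [mem_coveredSet]
  -- the ball from `0` reaches `F - a`, the one from `n` reaches down to `n - (F - b)`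
  by_cases hxa : x ≤ F - a
  · exact ⟨i, by linarith, by rw [hi.1, hi.2, Real.dist_eq, sub_zero, abs_of_nonneg hx0]; exact hxa⟩
  · refine ⟨j, ?_, ?_⟩
    · rcases hF_cases with h | h | h <;> linarith
    · rw [hj.1, hj.2, Real.dist_eq, abs_of_nonpos (by linarith)]
      rcases hF_cases with h | h | h <;> linarith

lemma not_Icc_subset_coveredSet_of_lt_endpointCoverTime (hn : 0 < n)
    (hseeds : ∀ k, (σs k ω = 0 ∧ a ≤ τ k ω) ∨ (σs k ω = n ∧ b ≤ τ k ω)) {t : ℝ}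
    (ht : t < endpointCoverTime n a b) : ¬ Icc 0 (n : ℝ) ⊆ coveredSet τ σs ω t := by
  have hn' : (0 : ℝ) < n := Nat.cast_pos.2 hn
  have hta : t < a + n := ht.trans_le ((min_le_left _ _).trans (min_le_left _ _))
  have htb : t < b + n := ht.trans_le ((min_le_left _ _).trans (min_le_right _ _))
  have hth : t < (a + b + n) / 2 := ht.trans_le (min_le_right _ _)
  -- the midpoint of the gap between `t - a` and `n - (t - b)` stays uncovered
  have hlt : max (t - a) 0 < min (n - (t - b)) n :=
    max_lt (lt_min (by linarith) (by linarith)) (lt_min (by linarith) hn')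
  set x := (max (t - a) 0 + min (n - (t - b)) n) / 2 with hx
  have h1 := le_max_left (t - a) 0
  have h2 := le_max_right (t - a) 0
  have h3 := min_le_left (n - (t - b)) n
  have h4 := min_le_right (n - (t - b)) n
  intro hcov
  obtain ⟨k, -, hk⟩ := mem_coveredSet.1 (hcov ⟨by linarith, by linarith⟩ : x ∈ _)
  rw [Real.dist_eq] at hk
  rcases hseeds k with ⟨h0, hak⟩ | ⟨hn0, hbk⟩
  · rw [h0, sub_zero, abs_of_nonneg (by linarith)] at hk
    linarith
  · rw [hn0, abs_of_nonpos (by linarith)] at hk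
    linarith

lemma segmentCoverTime_eq (hn : 0 < n) (ha : 0 ≤ a) (hb : 0 ≤ b) {i j : ℕ}
    (hi : σs i ω = 0 ∧ τ i ω = a) (hj : σs j ω = n ∧ τ j ω = b)
    (hseeds : ∀ k, (σs k ω = 0 ∧ a ≤ τ k ω) ∨ (σs k ω = n ∧ b ≤ τ k ω)) :
    segmentCoverTime n τ σs ω = endpointCoverTime n a b := by
  have hF0 : 0 ≤ endpointCoverTime n a b := le_min (le_min (by positivity) (by positivity))
    (by positivity)
  have hcov := Icc_subset_coveredSet_endpointCoverTime hi hj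
  exact le_antisymm (csInf_le ⟨0, fun t ht => ht.1⟩ ⟨hF0, hcov⟩)
    (le_csInf ⟨_, hF0, hcov⟩ fun t ht => not_lt.1 fun h =>
      not_Icc_subset_coveredSet_of_lt_endpointCoverTime hn hseeds h ht.2)

end EndpointSeeds

lemma abs_endpointCoverTime_div_sub_le {a b L : ℝ} (ha : 0 ≤ a) (hb : 0 ≤ b) (hL : 0 < L) :
    |endpointCoverTime L a b / L - min 1 ((1 + b / L) / 2)| ≤ a / L := by
  have hmin : min 1 ((1 + b / L) / 2) = min L ((L + b) / 2) / L := by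
    rw [← min_div_div_right hL.le, div_self hL.ne']
    congr 1
    field_simp
  rw [hmin, ← sub_div, abs_div, abs_of_pos hL]
  gcongr
  have hlower : min L ((L + b) / 2) ≤ endpointCoverTime L a b :=
    le_min (le_min ((min_le_left _ _).trans (by linarith)) ((min_le_left _ _).trans (by linarith)))
      ((min_le_right _ _).trans (by linarith))
  have hupper : endpointCoverTime L a b ≤ min L ((L + b) / 2) + a := by
    rw [← min_add_add_right]
    exact le_min (((min_le_left _ _).trans (min_le_left _ _)).trans_eq (add_comm _ _))
      ((min_le_right _ _).trans (by linarith))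
  rw [abs_le]
  constructor <;> linarith

section SegmentSeeds

variable {n : ℕ}

lemma isProbabilityMeasure_segSeedMeasure (hn : 1 ≤ n) :
    IsProbabilityMeasure (segSeedMeasure n) := by
  have h : (n : ℝ≥0∞)⁻¹ ≤ 1 := ENNReal.inv_le_one.2 (by exact_mod_cast hn)
  constructor
  simp [segSeedMeasure, tsub_add_cancel_of_le h]

lemma segSeedMeasure_singleton_natCast (hn : 1 ≤ n) :
    (segSeedMeasure n).real {(n : ℝ)} = (n : ℝ)⁻¹ := by
  have h0 : (0 : ℝ) ∉ ({(n : ℝ)} : Set ℝ) := by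
    simpa [eq_comm] using Nat.one_le_iff_ne_zero.1 hn
  simp [segSeedMeasure, measureReal_def, h0]

lemma segSeedMeasure_singleton_zero (hn : 1 ≤ n) :
    (segSeedMeasure n).real {0} = 1 - (n : ℝ)⁻¹ := by
  have h0 : (n : ℝ) ∉ ({0} : Set ℝ) := by
    simpa using Nat.one_le_iff_ne_zero.1 hn
  have h : (n : ℝ≥0∞)⁻¹ ≤ 1 := ENNReal.inv_le_one.2 (by exact_mod_cast hn)
  simp [segSeedMeasure, measureReal_def, h0, ENNReal.toReal_sub_of_le h ENNReal.one_ne_top]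

lemma segSeedMeasure_singleton_zero_pos (hn : 2 ≤ n) : 0 < (segSeedMeasure n).real {0} := by
  rw [segSeedMeasure_singleton_zero (by omega), sub_pos]
  exact inv_lt_one_of_one_lt₀ (by exact_mod_cast hn)

lemma segSeedMeasure_compl_pair : segSeedMeasure n {0, (n : ℝ)}ᶜ = 0 := by
  simp [segSeedMeasure]

end SegmentSeeds

namespace IsGrowthModel

variable {Ω : Type*} [MeasurableSpace Ω] {P : Measure Ω} [IsProbabilityMeasure P] {n : ℕ}
  {τ σs : ℕ → Ω → ℝ}

lemma ae_segmentCoverTime_eq (M : IsGrowthModel P (segSeedMeasure n) τ σs) (hn : 2 ≤ n) :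
    ∀ᵐ ω ∂P, segmentCoverTime n τ σs ω
      = endpointCoverTime n (hitTime σs {0} τ ω) (hitTime σs {(n : ℝ)} τ ω) := by
  have := isProbabilityMeasure_segSeedMeasure (n := n) (by omega)
  have hN : 0 < (segSeedMeasure n).real {(n : ℝ)} := by
    rw [segSeedMeasure_singleton_natCast (by omega)]
    positivity
  have hpair : ∀ᵐ ω ∂P, ∀ k, σs k ω ∈ ({0, (n : ℝ)} : Set ℝ) := ae_all_iff.2 fun k => by
    rw [ae_iff]
    exact (M.measure_preimage_seed k ((measurableSet_singleton _).insert 0).compl).trans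
      segSeedMeasure_compl_pair
  have h0 := segSeedMeasure_singleton_zero_pos hn
  filter_upwards [M.ae_exists_mem (measurableSet_singleton 0) h0,
    M.ae_exists_mem (measurableSet_singleton _) hN, hpair] with ω hω0 hωN hωpair
  refine segmentCoverTime_eq (by omega) (M.arrival_pos _ ω).le (M.arrival_pos _ ω).le
    ⟨(mem_hitsFirstAt_firstHit hω0).1, rfl⟩ ⟨(mem_hitsFirstAt_firstHit hωN).1, rfl⟩ fun k => ?_
  rcases hωpair k with hk | hk
  · exact Or.inl ⟨hk, hitTime_le (M.mono ω).monotone hk⟩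
  · exact Or.inr ⟨hk, hitTime_le (M.mono ω).monotone hk⟩

lemma map_hitTime_natCast_div (M : IsGrowthModel P (segSeedMeasure n) τ σs) (hn : 1 ≤ n) :
    P.map (fun ω => hitTime σs {(n : ℝ)} τ ω / n) = expMeasure 1 := by
  have := isProbabilityMeasure_segSeedMeasure hn
  have hn' : (0 : ℝ) < (n : ℝ)⁻¹ := by positivity
  have hT := measurable_hitTime M.meas_τ M.meas_σ (measurableSet_singleton (n : ℝ))
  calc P.map (fun ω => hitTime σs {(n : ℝ)} τ ω / n)
      = (P.map (hitTime σs {(n : ℝ)} τ)).map ((n : ℝ)⁻¹ * ·) := by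
        rw [Measure.map_map (by fun_prop) hT]
        simp only [Function.comp_def, div_eq_inv_mul]
    _ = expMeasure 1 := by
        rw [M.map_hitTime (measurableSet_singleton _)
          (by rw [segSeedMeasure_singleton_natCast hn]; exact hn'),
          segSeedMeasure_singleton_natCast hn, expMeasure_map_const_mul hn' hn', div_self hn'.ne']

lemma measure_lt_abs_sub_le (M : IsGrowthModel P (segSeedMeasure n) τ σs) (hn : 2 ≤ n) {δ : ℝ}
    (hδ : 0 ≤ δ) :
    P {ω | δ < |endpointCoverTime n (hitTime σs {0} τ ω) (hitTime σs {(n : ℝ)} τ ω) / n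
      - min 1 ((1 + hitTime σs {(n : ℝ)} τ ω / n) / 2)|}
      ≤ ENNReal.ofReal (Real.exp (-(δ * (n - 1)))) := by
  have := isProbabilityMeasure_segSeedMeasure (n := n) (by omega)
  have hn' : (0 : ℝ) < n := by positivity
  calc _ ≤ P {ω | δ * n < hitTime σs {0} τ ω} := by
        refine measure_mono fun ω (hω : δ < _) => ?_
        have := hω.trans_le (abs_endpointCoverTime_div_sub_le
          (M.arrival_pos _ ω).le (M.arrival_pos _ ω).le hn')
        exact (lt_div_iff₀ hn').1 this
    _ = ENNReal.ofReal (Real.exp (-(δ * (n - 1)))) := by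
        rw [M.measure_lt_hitTime (measurableSet_singleton 0) (segSeedMeasure_singleton_zero_pos hn)
          (by positivity), segSeedMeasure_singleton_zero (by omega)]
        field_simp

end IsGrowthModel

lemma tendsto_measure_lt_abs_endpointCoverTime_div_sub {Ω : ℕ → Type*}
    [∀ n, MeasurableSpace (Ω n)] {P : ∀ n, Measure (Ω n)} [∀ n, IsProbabilityMeasure (P n)]
    {τ σs : ∀ n, ℕ → Ω n → ℝ}
    (hmodel : ∀ᶠ n in atTop, IsGrowthModel (P n) (segSeedMeasure n) (τ n) (σs n)) {δ : ℝ}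
    (hδ : 0 < δ) :
    Tendsto (fun n : ℕ => P n {ω | δ <
      |endpointCoverTime n (hitTime (σs n) {0} (τ n) ω) (hitTime (σs n) {(n : ℝ)} (τ n) ω) / n
        - min 1 ((1 + hitTime (σs n) {(n : ℝ)} (τ n) ω / n) / 2)|}) atTop (𝓝 0) := by
  have hexp : Tendsto (fun n : ℕ => ENNReal.ofReal (Real.exp (-(δ * (n - 1))))) atTop (𝓝 0) := by
    rw [← ENNReal.ofReal_zero]
    exact ENNReal.tendsto_ofReal (Real.tendsto_exp_neg_atTop_nhds_zero.comp
      ((tendsto_atTop_add_const_right _ (-1) tendsto_natCast_atTop_atTop).const_mul_atTop hδ))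
  refine tendsto_of_tendsto_of_tendsto_of_le_of_le' tendsto_const_nhds hexp
    (Eventually.of_forall fun _ => zero_le) ?_
  filter_upwards [hmodel, eventually_ge_atTop 2] with n M hn
  exact M.measure_lt_abs_sub_le hn hδ.le

/-- Example: for the standardized growth model on the segment `[0,n]` with seed
distribution `(1 − 1/n) δ₀ + (1/n) δₙ`, the rescaled cover time `C⁽ⁿ⁾/n` converges in
distribution as `n → ∞` to `min (1, (1+ξ)/2)` with `ξ ~ Exponential(1)`. -/
theorem segment_growth_model_limit
    (Ω : ℕ → Type*) [∀ n, MeasurableSpace (Ω n)]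
    (P : ∀ n, Measure (Ω n)) [∀ n, IsProbabilityMeasure (P n)]
    (τ : ∀ n, ℕ → Ω n → ℝ) (σs : ∀ n, ℕ → Ω n → ℝ)
    (hmodel : ∀ n, 1 ≤ n → IsGrowthModel (P n) (segSeedMeasure n) (τ n) (σs n)) :
    ∀ f : BoundedContinuousFunction ℝ ℝ,
      Filter.Tendsto
        (fun n => ∫ ω, f (segmentCoverTime n (τ n) (σs n) ω / n) ∂(P n))
        Filter.atTop
        (nhds (∫ x, f (min 1 ((1 + x) / 2)) ∂(expMeasure 1))) := by
  intro f
  set T₀ : ∀ n, Ω n → ℝ := fun n => hitTime (σs n) {0} (τ n)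
  set Tₙ : ∀ n, Ω n → ℝ := fun n => hitTime (σs n) {(n : ℝ)} (τ n)
  have hmodel' : ∀ᶠ n in atTop, IsGrowthModel (P n) (segSeedMeasure n) (τ n) (σs n) :=
    eventually_atTop.2 ⟨1, hmodel⟩
  have hmeas : ∀ᶠ n in atTop, Measurable (T₀ n) ∧ Measurable (Tₙ n) := hmodel'.mono fun n M =>
    ⟨measurable_hitTime M.meas_τ M.meas_σ (measurableSet_singleton _),
      measurable_hitTime M.meas_τ M.meas_σ (measurableSet_singleton _)⟩
  have hlimit := tendsto_integral_sub_of_tendsto_measure_dist (P := P)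
    (X := fun n ω => endpointCoverTime n (T₀ n ω) (Tₙ n ω) / n)
    (Y := fun n ω => min 1 ((1 + Tₙ n ω / n) / 2)) (K := Icc 0 1)
    (hmeas.mono fun n h => ((continuous_endpointCoverTime n).measurable.comp
      (h.1.prodMk h.2)).div_const _)
    (hmeas.mono fun n h => by have := h.2; fun_prop) isCompact_Icc
    (hmodel'.mono fun n M => ae_of_all _ fun ω =>
      ⟨le_min zero_le_one (by have : 0 ≤ Tₙ n ω := (M.arrival_pos _ ω).le; positivity),
        min_le_left _ _⟩)
    (fun δ hδ => tendsto_measure_lt_abs_endpointCoverTime_div_sub hmodel' hδ) f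
  refine (zero_add (∫ x, f (min 1 ((1 + x) / 2)) ∂expMeasure 1) ▸ hlimit.add_const _).congr' ?_
  filter_upwards [hmodel', hmeas, eventually_ge_atTop 2] with n M ⟨_, hTₙ⟩ hn
  have hX : ∫ ω, f (segmentCoverTime n (τ n) (σs n) ω / n) ∂P n
      = ∫ ω, f (endpointCoverTime n (T₀ n ω) (Tₙ n ω) / n) ∂P n :=
    integral_congr_ae ((M.ae_segmentCoverTime_eq hn).mono fun ω h => by simp only [h, T₀, Tₙ])
  rw [hX, ← M.map_hitTime_natCast_div (by omega), integral_map (hTₙ.div_const _).aemeasurable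
      (by fun_prop : Continuous fun x : ℝ => f (min 1 ((1 + x) / 2))).aestronglyMeasurable,
    sub_add_cancel]
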